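/- Let K be a compact (Hausdorff) space. Then K is weakly non-commutative Valdivia if and only if there exist a compact space L admitting a retractional skeleton and a continuous surjection from L onto K. -/

import Mathlib

open Filter Topology Set

universe u

section Defs

/-- A space is countably compact if every countable open cover has a finite subcover. -/
def CountablyCompact (X : Type u) [TopologicalSpace X] : Prop :=
  ∀ U : ℕ → Set X, (∀ n, IsOpen (U n)) → (⋃ n, U n) = Set.univ →
    ∃ t : Finset ℕ, (⋃ n ∈ t, U n) = Set.univ

variable {X : Type u} [TopologicalSpace X]

/-- A retractional skeleton on a topological space `X`. -/
structure IsRetractionalSkeleton {Γ : Type u} [PartialOrder Γ] (r : Γ → X → X) : Prop where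
  nonempty : Nonempty Γ
  directed : ∀ s t : Γ, ∃ w, s ≤ w ∧ t ≤ w
  continuous : ∀ s, Continuous (r s)
  retraction : ∀ s, r s ∘ r s = r s
  compact_range : ∀ s, IsCompact (Set.range (r s))
  metrizable_range : ∀ s, TopologicalSpace.MetrizableSpace (Set.range (r s))
  comp_eq_of_le : ∀ s t, s ≤ t → r t ∘ r s = r s ∧ r s ∘ r t = r s
  seq_sup : ∀ u : ℕ → Γ, Monotone u →
    ∃ t, IsLUB (Set.range u) t ∧
      ∀ x, Filter.Tendsto (fun n => r (u n) x) Filter.atTop (nhds (r t x))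
  tendsto_id : ∀ x, Filter.Tendsto (fun s => r s x) Filter.atTop (nhds x)

/-- `X` admits a retractional skeleton (non-commutative Valdivia when `X` is compact). -/
def HasRetractionalSkeleton (X : Type u) [TopologicalSpace X] : Prop :=
  ∃ (Γ : Type u) (_ : PartialOrder Γ) (r : Γ → X → X), IsRetractionalSkeleton r

/-- `X` admits a full retractional skeleton. -/
def HasFullRetractionalSkeleton (X : Type u) [TopologicalSpace X] : Prop :=
  ∃ (Γ : Type u) (_ : PartialOrder Γ) (r : Γ → X → X),
    IsRetractionalSkeleton r ∧ ∀ x : X, ∃ s, x ∈ Set.range (r s)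

/-- A non-commutative Corson countably compact space. -/
def IsNCCorson (X : Type u) [TopologicalSpace X] : Prop :=
  CountablyCompact X ∧ HasFullRetractionalSkeleton X

/-- A weakly non-commutative Corson countably compact space: a countably compact
continuous image of a non-commutative Corson countably compact space. -/
def IsWeaklyNCCorson (Y : Type u) [TopologicalSpace Y] : Prop :=
  CountablyCompact Y ∧
  ∃ (X : Type u) (_ : TopologicalSpace X) (_ : T2Space X) (_ : CompletelyRegularSpace X),
    IsNCCorson X ∧ ∃ f : X → Y, Continuous f ∧ Function.Surjective f

/-- A weakly non-commutative Valdivia compact space: a compact space with a dense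
countably compact subspace which is weakly non-commutative Corson. -/
def IsWeaklyNCValdivia (K : Type u) [TopologicalSpace K] : Prop :=
  CompactSpace K ∧ ∃ D : Set K, Dense D ∧ IsWeaklyNCCorson ↥D

end Defs

/-!
Backward implication: the union `S` of the ranges of a retractional skeleton on `L` is dense, and
it is countably compact because a sequence in `S` lies in the compact range of `r t`, `t` the
supremum of countably many indices. The skeleton restricts to a full one on `S`, and `h '' S` is
the required dense subspace of `K`.

Forward implication: for `F : X → K` with dense range and a full skeleton `r` on `X`, let `L` be
the closure of the points `((r s x)_s, F x)` in `(Γ → X) × K`. It is compact, the maps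
`(p, k) ↦ ((r t (p s))_t, F (p s))` form a retractional skeleton on it, and the second projection
maps it onto `K`. The only delicate axiom is `F (p s) → k`, which needs a diagonal argument.
-/

open TopologicalSpace

theorem countablyCompact_iff_countablyCompactSpace (Y : Type u) [TopologicalSpace Y] :
    CountablyCompact Y ↔ CountablyCompactSpace Y := by
  rw [← isCountablyCompact_univ_iff, isCountablyCompact_iff_countable_open_cover]
  simp only [CountablyCompact, univ_subset_iff]

theorem exists_monotone_seq_ge {α : Type*} [Preorder α] [IsDirectedOrder α] (u : ℕ → α) :
    ∃ v : ℕ → α, Monotone v ∧ u ≤ v := by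
  choose w hw using fun a b : α => exists_ge_ge a b
  refine ⟨fun n => Nat.rec (u 0) (fun m vm => w vm (u (m + 1))) n,
    monotone_nat_of_le_succ fun n => (hw _ _).1, fun n => ?_⟩
  cases n with
  | zero => exact le_rfl
  | succ n => exact (hw _ _).2

namespace IsRetractionalSkeleton

variable {X Γ : Type u} [TopologicalSpace X] [PartialOrder Γ] {r : Γ → X → X}

theorem isDirectedOrder (hr : IsRetractionalSkeleton r) : IsDirectedOrder Γ :=
  ⟨hr.directed⟩

theorem apply_of_le_of_mem_range (hr : IsRetractionalSkeleton r) {s t : Γ} (hst : s ≤ t)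
    {x : X} (hx : x ∈ range (r s)) : r t x = x := by
  obtain ⟨y, rfl⟩ := hx
  exact congrFun (hr.comp_eq_of_le s t hst).1 y

theorem apply_of_mem_range (hr : IsRetractionalSkeleton r) {s : Γ} {x : X}
    (hx : x ∈ range (r s)) : r s x = x :=
  hr.apply_of_le_of_mem_range le_rfl hx

theorem range_mono (hr : IsRetractionalSkeleton r) : Monotone fun s => range (r s) :=
  fun _ _ hst _ hx => ⟨_, hr.apply_of_le_of_mem_range hst hx⟩

/-- The ranges along an increasing sequence of indices lie in the compact range of its
supremum, which supplies the cluster point. -/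
theorem exists_mapClusterPt [T2Space X] (hr : IsRetractionalSkeleton r) {u : ℕ → Γ}
    (hu : Monotone u) {x : ℕ → X} (hx : ∀ᶠ m in atTop, ∃ n, x m ∈ range (r (u n))) :
    ∃ z, (∃ t, z ∈ range (r t)) ∧ MapClusterPt z atTop x ∧
      Tendsto (fun n => r (u n) z) atTop (𝓝 z) := by
  obtain ⟨t, -, ht⟩ := hr.seq_sup u hu
  have hmem : ∀ y, (∃ n, y ∈ range (r (u n))) → y ∈ range (r t) := by
    rintro y ⟨n, hn⟩
    refine ⟨y, tendsto_nhds_unique (ht y) (tendsto_const_nhds.congr' ?_)⟩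
    filter_upwards [eventually_ge_atTop n] with k hk
    exact (hr.apply_of_le_of_mem_range (hu hk) hn).symm
  obtain ⟨z, hz, hzx⟩ :=
    (hr.compact_range t).exists_mapClusterPt_of_frequently
      (hx.mono fun m => hmem (x m)).frequently
  have hzt := ht z
  rw [hr.apply_of_mem_range hz] at hzt
  exact ⟨z, ⟨t, hz⟩, hzx, hzt⟩

theorem dense_iUnion_range (hr : IsRetractionalSkeleton r) : Dense (⋃ s, range (r s)) := by
  have := hr.nonempty
  have := hr.isDirectedOrder
  exact fun x => mem_closure_of_tendsto (hr.tendsto_id x)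
    (Eventually.of_forall fun s => mem_iUnion.2 ⟨s, mem_range_self x⟩)

theorem isCountablyCompact_iUnion_range [T2Space X] (hr : IsRetractionalSkeleton r) :
    IsCountablyCompact (⋃ s, range (r s)) := by
  have := hr.nonempty
  have := hr.isDirectedOrder
  refine IsCountablyCompact.of_seq_clusterPt fun x hx => ?_
  have hindex : ∀ m, ∃ s, x m ∈ ⋃ s, range (r s) → x m ∈ range (r s) := fun m => by
    by_cases hm : x m ∈ ⋃ s, range (r s)
    · exact (mem_iUnion.1 hm).imp fun _ hs _ => hs
    · exact ⟨Classical.arbitrary Γ, fun h => absurd h hm⟩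
  choose σ hσ using hindex
  obtain ⟨u, hu, hσu⟩ := exists_monotone_seq_ge σ
  obtain ⟨z, ⟨t, hz⟩, hzx, -⟩ :=
    hr.exists_mapClusterPt hu (hx.mono fun m hm => ⟨m, hr.range_mono (hσu m) (hσ m hm)⟩)
  exact ⟨z, mem_iUnion.2 ⟨t, hz⟩, hzx⟩

theorem restrict (hr : IsRetractionalSkeleton r) {S : Set X} (hS : ∀ s, range (r s) ⊆ S) :
    IsRetractionalSkeleton fun s (z : S) => (⟨r s z, hS s (mem_range_self _)⟩ : S) := by
  set R : Γ → S → S := fun s z => ⟨r s z, hS s (mem_range_self _)⟩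
  have hrange : ∀ s, Subtype.val '' range (R s) = range (r s) := fun s => by
    refine Subset.antisymm ?_ fun x hx =>
      ⟨⟨x, hS s hx⟩, ⟨⟨x, hS s hx⟩, Subtype.ext (hr.apply_of_mem_range hx)⟩, rfl⟩
    rintro _ ⟨_, ⟨z, rfl⟩, rfl⟩
    exact mem_range_self _
  refine ⟨hr.nonempty, hr.directed,
    fun s => ((hr.continuous s).comp continuous_subtype_val).subtype_mk _,
    fun s => funext fun z => Subtype.ext (congrFun (hr.retraction s) z),
    fun s => IsEmbedding.subtypeVal.isCompact_iff.2 (hrange s ▸ hr.compact_range s),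
    fun s => ?_, fun s t hst => ?_, fun u hu => ?_,
    fun z => tendsto_subtype_rng.2 (hr.tendsto_id z)⟩
  · have := hr.metrizable_range s
    exact ((IsEmbedding.subtypeVal.comp IsEmbedding.subtypeVal).codRestrict _
      fun q => hrange s ▸ mem_image_of_mem _ q.2).metrizableSpace
  · exact ⟨funext fun z => Subtype.ext (congrFun (hr.comp_eq_of_le s t hst).1 z),
      funext fun z => Subtype.ext (congrFun (hr.comp_eq_of_le s t hst).2 z)⟩
  · obtain ⟨t, hlub, ht⟩ := hr.seq_sup u hu
    exact ⟨t, hlub, fun z => tendsto_subtype_rng.2 (ht z)⟩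

theorem hasFullRetractionalSkeleton_iUnion_range (hr : IsRetractionalSkeleton r) :
    HasFullRetractionalSkeleton (⋃ s, range (r s)) := by
  refine ⟨Γ, _, _, hr.restrict fun s => subset_iUnion (fun s => range (r s)) s, fun z => ?_⟩
  obtain ⟨s, hs⟩ := mem_iUnion.1 z.2
  exact ⟨s, z, Subtype.ext (hr.apply_of_mem_range hs)⟩

end IsRetractionalSkeleton

section SkeletonHull

variable {X Γ K : Type u} [TopologicalSpace X] [PartialOrder Γ] [TopologicalSpace K]

def skeletonLift (r : Γ → X → X) (F : X → K) (x : X) : (Γ → X) × K :=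
  (fun s => r s x, F x)

def skeletonHull (r : Γ → X → X) (F : X → K) : Set ((Γ → X) × K) :=
  closure (range (skeletonLift r F))

def hullRetraction (r : Γ → X → X) (F : X → K) (s : Γ) (p : skeletonHull r F) :
    skeletonHull r F :=
  ⟨skeletonLift r F (p.1.1 s), subset_closure (mem_range_self _)⟩

variable {r : Γ → X → X} {F : X → K}

theorem continuous_skeletonLift (hr : IsRetractionalSkeleton r) (hF : Continuous F) :
    Continuous (skeletonLift r F) :=
  (continuous_pi hr.continuous).prodMk hF

theorem IsRetractionalSkeleton.mem_range_of_mem_skeletonHull [T2Space X]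
    (hr : IsRetractionalSkeleton r) {p : (Γ → X) × K} (hp : p ∈ skeletonHull r F) (s : Γ) :
    p.1 s ∈ range (r s) :=
  closure_minimal (t := {p : (Γ → X) × K | p.1 s ∈ range (r s)})
    (range_subset_iff.2 fun x => mem_range_self (f := r s) x)
    ((hr.compact_range s).isClosed.preimage ((continuous_apply s).comp continuous_fst)) hp

theorem IsRetractionalSkeleton.apply_of_mem_skeletonHull [T2Space X]
    (hr : IsRetractionalSkeleton r) {p : (Γ → X) × K} (hp : p ∈ skeletonHull r F) {s t : Γ}
    (hst : s ≤ t) : r s (p.1 t) = p.1 s :=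
  closure_minimal (t := {p : (Γ → X) × K | r s (p.1 t) = p.1 s})
    (range_subset_iff.2 fun x => congrFun (hr.comp_eq_of_le s t hst).2 x)
    (isClosed_eq ((hr.continuous s).comp ((continuous_apply t).comp continuous_fst))
      ((continuous_apply s).comp continuous_fst)) hp

theorem IsRetractionalSkeleton.isCompact_skeletonHull [T2Space X] [CompactSpace K] [T2Space K]
    (hr : IsRetractionalSkeleton r) (F : X → K) : IsCompact (skeletonHull r F) := by
  have hbox : IsCompact (univ.pi (fun s => range (r s)) ×ˢ (univ : Set K)) :=
    (isCompact_univ_pi hr.compact_range).prod isCompact_univ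
  refine hbox.of_isClosed_subset isClosed_closure (closure_minimal ?_ hbox.isClosed)
  rintro _ ⟨x, rfl⟩
  exact ⟨fun s _ => mem_range_self x, mem_univ _⟩

theorem IsRetractionalSkeleton.exists_next_of_mem_skeletonHull (hr : IsRetractionalSkeleton r)
    (hfull : ∀ x, ∃ s, x ∈ range (r s)) (hF : Continuous F) {p : (Γ → X) × K}
    (hp : p ∈ skeletonHull r F) {G B : Set K} (hG : IsOpen G) (hB : IsOpen B) (hpG : p.2 ∈ G)
    (hfreq : ∃ᶠ s in atTop, F (p.1 s) ∈ B) (Q : Finset (Γ × X))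
    (hQ : ∀ c ∈ Q, F (p.1 c.1) ∈ B) :
    ∃ c : Γ × X, (F (p.1 c.1) ∈ B ∧ F c.2 ∈ G) ∧
      ∀ c' ∈ Q, c'.1 ≤ c.1 ∧ F (r c'.1 c.2) ∈ B ∧ c'.2 ∈ range (r c.1) := by
  classical
  have := hr.nonempty
  have := hr.isDirectedOrder
  choose σ hσ using hfull
  obtain ⟨b, hb⟩ := (Q.image Prod.fst ∪ Q.image (σ ∘ Prod.snd)).exists_le
  obtain ⟨s, hbs, hs⟩ := frequently_atTop.1 hfreq b
  have hnear : ∀ᶠ y in 𝓝 p, y.2 ∈ G ∧ ∀ c ∈ Q, F (y.1 c.1) ∈ B := by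
    have hnearG : ∀ᶠ y in 𝓝 p, y.2 ∈ G :=
      continuous_snd.continuousAt.preimage_mem_nhds (hG.mem_nhds hpG)
    refine hnearG.and ((eventually_all_finset Q).2 fun c hc => ?_)
    exact (hF.comp ((continuous_apply c.1).comp continuous_fst)).continuousAt.preimage_mem_nhds
      (hB.mem_nhds (hQ c hc))
  obtain ⟨_, ⟨x, rfl⟩, hxG, hxB⟩ :=
    ((mem_closure_iff_frequently.1 hp).and_eventually hnear).exists
  refine ⟨(s, x), ⟨hs, hxG⟩, fun c hc => ⟨?_, hxB c hc, ?_⟩⟩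
  · exact (hb _ (Finset.mem_union_left _ (Finset.mem_image_of_mem _ hc))).trans hbs
  · exact ⟨c.2, hr.apply_of_le_of_mem_range
      ((hb _ (Finset.mem_union_right _ (Finset.mem_image_of_mem _ hc))).trans hbs) (hσ c.2)⟩

/-- If `F (p.1 s)` visited `B` frequently, the diagonal choice would give points `x n` with
`F (x n) ∈ G` and `F (r (s m) (x n)) ∈ B` for `m < n`, all in the range of `r` at the
supremum `t` of the `s n`; a cluster point `z` then has `F z ∈ closure G`, while
`F z = lim F (r (s m) z) ∈ closure B`. -/
theorem IsRetractionalSkeleton.not_frequently_mem_of_mem_skeletonHull [T2Space X]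
    (hr : IsRetractionalSkeleton r) (hfull : ∀ x, ∃ s, x ∈ range (r s)) (hF : Continuous F)
    {p : (Γ → X) × K} (hp : p ∈ skeletonHull r F) {G B : Set K} (hG : IsOpen G)
    (hB : IsOpen B) (hpG : p.2 ∈ G) (hGB : Disjoint (closure G) (closure B)) :
    ¬ ∃ᶠ s in atTop, F (p.1 s) ∈ B := by
  intro hfreq
  obtain ⟨c, hcG, hcB⟩ := exists_seq_of_forall_finset_exists _ _ fun Q hQ =>
    hr.exists_next_of_mem_skeletonHull hfull hF hp hG hB hpG hfreq Q fun c hc => (hQ c hc).1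
  have hmono : Monotone fun n => (c n).1 :=
    monotone_nat_of_le_succ fun n => (hcB n (n + 1) n.lt_succ_self).1
  obtain ⟨z, -, hzc, hz⟩ := hr.exists_mapClusterPt hmono (x := fun n => (c n).2)
    (Eventually.of_forall fun m => ⟨m + 1, (hcB m (m + 1) m.lt_succ_self).2.2⟩)
  have hzG : F z ∈ closure G :=
    (hzc.continuousAt_comp hF.continuousAt).mem_closure_of_mem _
      (mem_map.2 (Eventually.of_forall fun n => (hcG n).2))
  have hzB : ∀ m, F (r (c m).1 z) ∈ closure B := fun m =>
    (hzc.continuousAt_comp (hF.comp (hr.continuous _)).continuousAt).mem_closure_of_mem _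
      (mem_map.2 ((eventually_gt_atTop m).mono fun n hn => (hcB m n hn).2.1))
  exact hGB.ne_of_mem hzG
    (isClosed_closure.mem_of_tendsto ((hF.tendsto z).comp hz) (Eventually.of_forall hzB)) rfl

theorem IsRetractionalSkeleton.tendsto_of_mem_skeletonHull [T2Space X] [RegularSpace K]
    (hr : IsRetractionalSkeleton r) (hfull : ∀ x, ∃ s, x ∈ range (r s)) (hF : Continuous F)
    {p : (Γ → X) × K} (hp : p ∈ skeletonHull r F) :
    Tendsto (fun s => F (p.1 s)) atTop (𝓝 p.2) := by
  intro U hU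
  obtain ⟨C, hC, hCc, hCU⟩ := exists_mem_nhds_isClosed_subset hU
  obtain ⟨D, hD, hDc, hDC⟩ := exists_mem_nhds_isClosed_subset (interior_mem_nhds.2 hC)
  have hdisj : Disjoint (closure (interior D)) (closure Cᶜ) := by
    rw [closure_compl]
    exact disjoint_compl_right_iff_subset.2 ((closure_minimal interior_subset hDc).trans hDC)
  have := hr.not_frequently_mem_of_mem_skeletonHull hfull hF hp isOpen_interior
    hCc.isOpen_compl (mem_interior_iff_mem_nhds.2 hD) hdisj
  exact (not_frequently.1 this).mono fun s hs => hCU (not_not.1 hs)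

theorem continuous_hullRetraction (hr : IsRetractionalSkeleton r) (hF : Continuous F) (s : Γ) :
    Continuous (hullRetraction r F s) :=
  ((continuous_skeletonLift hr hF).comp
    ((continuous_apply s).comp (continuous_fst.comp continuous_subtype_val))).subtype_mk _

theorem IsRetractionalSkeleton.hullRetraction_comp_of_le [T2Space X]
    (hr : IsRetractionalSkeleton r) {s t : Γ} (hst : s ≤ t) :
    hullRetraction r F t ∘ hullRetraction r F s = hullRetraction r F s ∧
      hullRetraction r F s ∘ hullRetraction r F t = hullRetraction r F s :=
  ⟨funext fun q => Subtype.ext <| congrArg (skeletonLift r F)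
      (hr.apply_of_le_of_mem_range hst (hr.mem_range_of_mem_skeletonHull q.2 s)),
    funext fun q => Subtype.ext <|
      congrArg (skeletonLift r F) (hr.apply_of_mem_skeletonHull q.2 hst)⟩

/-- `q ↦ q.1 s` embeds the range of `hullRetraction r F s` into the range of `r s`. -/
theorem IsRetractionalSkeleton.metrizableSpace_range_hullRetraction [T2Space X] [CompactSpace K]
    [T2Space K] (hr : IsRetractionalSkeleton r) (hF : Continuous F) (s : Γ) :
    MetrizableSpace (range (hullRetraction r F s)) := by
  have hfix : ∀ q : range (hullRetraction r F s), hullRetraction r F s q = q := by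
    rintro ⟨_, q, rfl⟩
    exact congrFun (hr.hullRetraction_comp_of_le le_rfl).1 q
  have := isCompact_iff_compactSpace.1 (hr.isCompact_skeletonHull F)
  have : CompactSpace (range (hullRetraction r F s)) :=
    isCompact_iff_compactSpace.1 (isCompact_range (continuous_hullRetraction hr hF s))
  have := hr.metrizable_range s
  refine (Continuous.isClosedEmbedding (f := fun q : range (hullRetraction r F s) =>
    (⟨q.1.1.1 s, hr.mem_range_of_mem_skeletonHull q.1.2 s⟩ : range (r s))) ?_ ?_).isEmbedding
    |>.metrizableSpace
  · exact ((continuous_apply s).comp (continuous_fst.comp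
      (continuous_subtype_val.comp continuous_subtype_val))).subtype_mk _
  · intro q₁ q₂ h
    rw [Subtype.ext_iff, ← hfix q₁, ← hfix q₂]
    exact Subtype.ext (congrArg (skeletonLift r F) (Subtype.ext_iff.1 h))

theorem IsRetractionalSkeleton.isRetractionalSkeleton_hullRetraction [T2Space X] [CompactSpace K]
    [T2Space K] (hr : IsRetractionalSkeleton r) (hfull : ∀ x, ∃ s, x ∈ range (r s))
    (hF : Continuous F) : IsRetractionalSkeleton (hullRetraction r F) := by
  have := isCompact_iff_compactSpace.1 (hr.isCompact_skeletonHull F)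
  refine ⟨hr.nonempty, hr.directed, continuous_hullRetraction hr hF,
    fun s => (hr.hullRetraction_comp_of_le le_rfl).1,
    fun s => isCompact_range (continuous_hullRetraction hr hF s),
    hr.metrizableSpace_range_hullRetraction hF, fun s t => hr.hullRetraction_comp_of_le,
    fun u hu => ?_, fun q => ?_⟩
  · obtain ⟨t, hlub, ht⟩ := hr.seq_sup u hu
    refine ⟨t, hlub, fun q => tendsto_subtype_rng.2 <|
      ((continuous_skeletonLift hr hF).tendsto _).comp ?_⟩
    have hq := ht (q.1.1 t)
    rw [hr.apply_of_mem_range (hr.mem_range_of_mem_skeletonHull q.2 t)] at hq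
    exact hq.congr fun n => hr.apply_of_mem_skeletonHull q.2 (hlub.1 (mem_range_self n))
  · refine tendsto_subtype_rng.2 (Tendsto.prodMk_nhds (tendsto_pi_nhds.2 fun v => ?_)
      (hr.tendsto_of_mem_skeletonHull hfull hF q.2))
    exact tendsto_const_nhds.congr'
      ((eventually_ge_atTop v).mono fun s hs => (hr.apply_of_mem_skeletonHull q.2 hs).symm)

end SkeletonHull

theorem exists_skeleton_surjective_of_denseRange {X K : Type u} [TopologicalSpace X] [T2Space X]
    [TopologicalSpace K] [CompactSpace K] [T2Space K] (hX : HasFullRetractionalSkeleton X)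
    {F : X → K} (hF : Continuous F) (hFd : DenseRange F) :
    ∃ (L : Type u) (_ : TopologicalSpace L) (_ : CompactSpace L) (_ : T2Space L),
      HasRetractionalSkeleton L ∧ ∃ f : L → K, Continuous f ∧ Function.Surjective f := by
  obtain ⟨Γ, _, r, hr, hfull⟩ := hX
  have hsnd : Continuous fun p : skeletonHull r F => p.1.2 :=
    continuous_snd.comp continuous_subtype_val
  have := isCompact_iff_compactSpace.1 (hr.isCompact_skeletonHull F)
  refine ⟨skeletonHull r F, inferInstance, inferInstance, inferInstance,
    ⟨Γ, _, _, hr.isRetractionalSkeleton_hullRetraction hfull hF⟩, _, hsnd, fun k => ?_⟩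
  refine closure_minimal ?_ (isCompact_range hsnd).isClosed (hFd k)
  rintro _ ⟨x, rfl⟩
  exact ⟨⟨skeletonLift r F x, subset_closure (mem_range_self x)⟩, rfl⟩

theorem isWeaklyNCValdivia_of_surjective {L K : Type u} [TopologicalSpace L] [CompactSpace L]
    [T2Space L] [TopologicalSpace K] (hL : HasRetractionalSkeleton L) {h : L → K}
    (hc : Continuous h) (hs : Function.Surjective h) : IsWeaklyNCValdivia K := by
  obtain ⟨Γ, _, r, hr⟩ := hL
  have hS := hr.isCountablyCompact_iUnion_range
  refine ⟨hs.compactSpace hc, h '' ⋃ s, range (r s),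
    hs.denseRange.dense_image hc hr.dense_iUnion_range,
    (countablyCompact_iff_countablyCompactSpace _).2
      (isCountablyCompact_iff_countablyCompactSpace.1 (hS.image hc)),
    _, inferInstance, inferInstance, inferInstance,
    ⟨(countablyCompact_iff_countablyCompactSpace _).2
      (isCountablyCompact_iff_countablyCompactSpace.1 hS),
      hr.hasFullRetractionalSkeleton_iUnion_range⟩,
    imageFactorization h _, (hc.comp continuous_subtype_val).subtype_mk _,
    imageFactorization_surjective⟩

theorem weaklyNCValdivia_iff_image_of_ncValdivia_general
    {K : Type u} [TopologicalSpace K] [T2Space K] :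
    IsWeaklyNCValdivia K ↔
      ∃ (L : Type u) (_ : TopologicalSpace L) (_ : CompactSpace L) (_ : T2Space L),
        HasRetractionalSkeleton L ∧ ∃ f : L → K, Continuous f ∧ Function.Surjective f := by
  constructor
  · rintro ⟨_, D, hD, -, X, _, _, -, ⟨-, hX⟩, f, hf, hfs⟩
    exact exists_skeleton_surjective_of_denseRange hX (continuous_subtype_val.comp hf)
      (hD.denseRange_val.comp hfs.denseRange continuous_subtype_val)
  · rintro ⟨L, _, _, _, hL, h, hc, hs⟩
    exact isWeaklyNCValdivia_of_surjective hL hc hs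

/-- A compact space is weakly non-commutative Valdivia iff it is a
continuous image of a compact space admitting a retractional skeleton. -/
theorem weaklyNCValdivia_iff_image_of_ncValdivia
    {K : Type u} [TopologicalSpace K] [CompactSpace K] [T2Space K] :
    IsWeaklyNCValdivia K ↔
      ∃ (L : Type u) (_ : TopologicalSpace L) (_ : CompactSpace L) (_ : T2Space L),
        HasRetractionalSkeleton L ∧ ∃ f : L → K, Continuous f ∧ Function.Surjective f :=
  weaklyNCValdivia_iff_image_of_ncValdivia_general
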